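/- arXiv:2204.02550 — 7 statements merged into one kernel-verified Lean document; each statement's English description precedes it below -/
import Mathlib

section
/- For integers n and k with 1 < k < n, there exists an integer matrix Q with n rows and 2n+5 columns such that: (i) the square submatrix Q₁ consisting of the first n columns of Q has determinant 1 (in particular it is invertible over ℤ); (ii) uᵀQ₁ = e₁ᵀ, where u ∈ ℤⁿ is the vector whose first k coordinates are 1 and whose remaining coordinates are 0, and e₁ ∈ ℤⁿ is the first standard basis vector; and (iii) the vector v := Q₂ᵀu ∈ ℤ^{n+5}, where Q₂ consists of the last n+5 columns of Q, satisfies Σᵢ vᵢ² = 4k and maxᵢ |vᵢ| = 2. -/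
/-- Gadget matrix lemma: for `1 < k < n` there is an integer matrix `Q` with `n` rows and
`2n+5` columns such that the first `n` columns `Q₁` have determinant `1`, `uᵀ Q₁ = e₁ᵀ`,
and `v = Q₂ᵀ u` (with `Q₂` the last `n+5` columns) satisfies `∑ vᵢ² = 4k` and
`max |vᵢ| = 2`. Here `u` has `1` in its first `k` coordinates and `0` elsewhere. -/
theorem stmt_1 (n k : ℕ) (hk : 1 < k) (hkn : k < n) :
    ∃ Q : Matrix (Fin n) (Fin (2 * n + 5)) ℤ,
      let Q₁ : Matrix (Fin n) (Fin n) ℤ :=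
        Matrix.of fun i (j : Fin n) => Q i ⟨(j : ℕ), by have := j.isLt; omega⟩
      let Q₂ : Matrix (Fin n) (Fin (n + 5)) ℤ :=
        Matrix.of fun i (j : Fin (n + 5)) => Q i ⟨n + (j : ℕ), by have := j.isLt; omega⟩
      let u : Fin n → ℤ := fun i => if (i : ℕ) < k then 1 else 0
      let v : Fin (n + 5) → ℤ := Matrix.vecMul u Q₂
      Q₁.det = 1 ∧
      Matrix.vecMul u Q₁ = (fun j : Fin n => if (j : ℕ) = 0 then 1 else 0) ∧
      (∑ i, v i ^ 2) = 4 * (k : ℤ) ∧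
      Finset.univ.sup' ⟨⟨0, by omega⟩, Finset.mem_univ _⟩ (fun i => |v i|) = 2 := by
  have hn : 0 < n := by omega
  refine ⟨Matrix.of fun i j =>
      if h : (j : ℕ) < n then
        (if (i : ℕ) = (j : ℕ) then 1
         else if (i : ℕ) = 0 ∧ 1 ≤ (j : ℕ) ∧ (j : ℕ) < k then -1 else 0)
      else (if (i : ℕ) = (j : ℕ) - n ∧ (j : ℕ) - n < k then 2 else 0), ?_⟩
  intro Q₁ Q₂ u v
  have hQ₁ : ∀ i j, Q₁ i j = (if (i : ℕ) = (j : ℕ) then 1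
      else if (i : ℕ) = 0 ∧ 1 ≤ (j : ℕ) ∧ (j : ℕ) < k then (-1 : ℤ) else 0) := by
    intro i j
    simp only [Q₁, Matrix.of_apply]
    rw [dif_pos j.isLt]
  have hQ₂ : ∀ i j, Q₂ i j = (if (i : ℕ) = (j : ℕ) ∧ (j : ℕ) < k then (2 : ℤ) else 0) := by
    intro i j
    simp only [Q₂, Matrix.of_apply]
    rw [dif_neg (by omega)]
    simp
  have hv : ∀ j, v j = if (j : ℕ) < k then (2 : ℤ) else 0 := by
    intro j
    simp only [v, Matrix.vecMul, dotProduct, u, hQ₂]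
    by_cases hj : (j : ℕ) < k
    · rw [if_pos hj]
      rw [Finset.sum_eq_single (⟨(j : ℕ), by omega⟩ : Fin n)]
      · simp [hj]
      · intro b _ hb
        have : (b : ℕ) ≠ (j : ℕ) := fun h => hb (Fin.ext h)
        simp [this]
      · simp
    · rw [if_neg hj]
      apply Finset.sum_eq_zero
      intro i _
      simp [hj]
  refine ⟨?_, ?_, ?_, ?_⟩
  · rw [Matrix.det_of_upperTriangular]
    · rw [Finset.prod_eq_one]
      intro i _
      rw [hQ₁]
      simp
    · intro i j hij
      rw [hQ₁]
      have h1 : (i : ℕ) ≠ (j : ℕ) := by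
        intro h; exact absurd (Fin.ext h) hij.ne'
      have h2 : (i : ℕ) ≠ 0 := by
        have : (j : ℕ) < (i : ℕ) := hij
        omega
      simp [h1, h2]
  · funext j
    simp only [Matrix.vecMul, dotProduct, u, hQ₁]
    by_cases hj0 : (j : ℕ) = 0
    · rw [if_pos hj0]
      rw [Finset.sum_eq_single (⟨0, hn⟩ : Fin n)]
      · simp [hj0]; omega
      · intro b _ hb
        have hb' : (b : ℕ) ≠ 0 := fun h => hb (Fin.ext h)
        simp [hj0, hb']
      · simp
    · rw [if_neg hj0]
      by_cases hjk : (j : ℕ) < k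
      · have heq : ∀ i : Fin n, (if (i : ℕ) < k then (1:ℤ) else 0) *
            (if (i : ℕ) = (j : ℕ) then 1 else if (i : ℕ) = 0 ∧ 1 ≤ (j : ℕ) ∧ (j : ℕ) < k then (-1:ℤ) else 0)
            = (if i = ⟨0, hn⟩ then (-1:ℤ) else 0) + (if i = j then (1:ℤ) else 0) := by
          intro i
          by_cases hi0 : i = ⟨0, hn⟩
          · subst hi0
            have hval : ¬ ((0 : ℕ) = (j : ℕ)) := fun h => hj0 h.symm
            have h0j : ¬ ((⟨0, hn⟩ : Fin n) = j) := fun h => hj0 (by rw [← h])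
            simp [hval, hjk, h0j, show 0 < k by omega, show 1 ≤ (j:ℕ) by omega]
          · by_cases hij : i = j
            · subst hij
              simp [hi0, hjk]
            · have h1 : (i : ℕ) ≠ (j : ℕ) := fun h => hij (Fin.ext h)
              have h2 : (i : ℕ) ≠ 0 := fun h => hi0 (Fin.ext h)
              simp [h1, h2, hi0, hij]
        rw [Finset.sum_congr rfl fun i _ => heq i, Finset.sum_add_distrib,
          Finset.sum_ite_eq' Finset.univ, Finset.sum_ite_eq' Finset.univ]
        simp
      · apply Finset.sum_eq_zero
        intro i _
        by_cases hik : (i : ℕ) < k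
        · have h1 : (i : ℕ) ≠ (j : ℕ) := by omega
          have : ¬ ((j : ℕ) < k) := hjk
          simp [h1, this]
        · simp [hik]
  · have : ∀ j : Fin (n+5), v j ^ 2 = if (j : ℕ) < k then (4:ℤ) else 0 := by
      intro j; rw [hv]; by_cases hj : (j:ℕ) < k <;> simp [hj]
    rw [Finset.sum_congr rfl fun j _ => this j]
    rw [Fin.sum_univ_eq_sum_range (fun i => if i < k then (4:ℤ) else 0)]
    rw [← Finset.sum_subset (Finset.range_subset_range.2 (by omega : k ≤ n + 5))]
    · rw [Finset.sum_congr rfl (fun x hx => if_pos (Finset.mem_range.1 hx)), Finset.sum_const,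
        Finset.card_range]
      ring
    · intro x _ hx
      rw [if_neg (by simpa using hx)]
  · apply le_antisymm
    · apply Finset.sup'_le
      intro i _
      rw [hv]
      by_cases hi : (i : ℕ) < k <;> simp [hi]
    · have := Finset.le_sup' (fun i => |v i|) (Finset.mem_univ (⟨0, by omega⟩ : Fin (n+5)))
      calc (2:ℤ) = |v ⟨0, by omega⟩| := by rw [hv]; simp [show 0 < k by omega]
        _ ≤ _ := this
end

section
/- Let R be a commutative ring and let n ≥ 2, m ≥ 1 be integers. Let Q ∈ R^{n×(2n+5)} be written as Q = [Q₁ | Q₂] with Q₁ ∈ R^{n×n} and Q₂ ∈ R^{n×(n+5)}, let Z ∈ R^{n×n}, and let z, u ∈ Rⁿ and v ∈ R^{n+5} satisfy Z·z = u, Q₁ᵀ·u = e₁, and Q₂ᵀ·u = v, where e₁ ∈ Rⁿ is the first standard basis vector. Then for all column vectors s, e ∈ R^m, a ∈ R^{n−1}, and matrices B ∈ R^{m×(n−1)}, G ∈ R^{m×(n+5)}: (s + e) − ([s | s·aᵀ + B | G]·Qᵀ·Z)·z = e − G·v, where [s | s·aᵀ + B | G] ∈ R^{m×(2n+5)} denotes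 the block matrix whose first column is s, whose next n−1 columns are s·aᵀ + B, and whose last n+5 columns are G. -/
open Matrix

/-! `Q₁ᵀ u = e₁` makes the first block of `[s | s·aᵀ + B | G]·Qᵀ·u` pick out its first column `s`,
while the second block is `G·(Q₂ᵀ u) = G·v`; everything else cancels. -/

theorem Fin.ite_val_eq_zero_eq_single {R : Type*} [Zero R] [One R] {n : ℕ} (hn : 0 < n) :
    (fun j : Fin n => if (j : ℕ) = 0 then (1 : R) else 0) = Pi.single ⟨0, hn⟩ 1 := by
  ext j
  simp only [Pi.single_apply, Fin.ext_iff]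

/-- The key algebraic identity behind the `k`-sparse LWE reduction:
`(s + e) − ([s | s·aᵀ + B | G]·Qᵀ·Z)·z = e − G·v`, given `Z·z = u`, `Q₁ᵀ·u = e₁`,
`Q₂ᵀ·u = v`, where `Q = [Q₁ | Q₂]`. -/
theorem stmt_4 {R : Type*} [CommRing R] (n m : ℕ) (hn : 2 ≤ n)
    (Q₁ : Matrix (Fin n) (Fin n) R) (Q₂ : Matrix (Fin n) (Fin (n + 5)) R)
    (Z : Matrix (Fin n) (Fin n) R) (z u : Fin n → R) (v : Fin (n + 5) → R)
    (hZz : Z.mulVec z = u)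
    (hQ₁ : Q₁ᵀ.mulVec u = fun j : Fin n => if (j : ℕ) = 0 then 1 else 0)
    (hQ₂ : Q₂ᵀ.mulVec u = v)
    (s e : Fin m → R) (a : Fin (n - 1) → R)
    (B : Matrix (Fin m) (Fin (n - 1)) R) (G : Matrix (Fin m) (Fin (n + 5)) R) :
    (s + e) -
        ((Matrix.fromCols
              (Matrix.of fun i (j : Fin n) =>
                if h : (j : ℕ) = 0 then s i
                else s i * a ⟨(j : ℕ) - 1, by have := j.isLt; omega⟩ +
                  B i ⟨(j : ℕ) - 1, by have := j.isLt; omega⟩)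
              G) *
            (Matrix.fromCols Q₁ Q₂)ᵀ * Z).mulVec z =
      e - G.mulVec v := by
  rw [← mulVec_mulVec, ← mulVec_mulVec, hZz, transpose_fromCols, fromRows_mulVec, hQ₁, hQ₂,
    fromCols_mulVec_sumElim, Fin.ite_val_eq_zero_eq_single (by omega), mulVec_single_one]
  ext i
  simp only [col_apply, of_apply, dif_pos, Pi.add_apply, Pi.sub_apply]
  abel
end

section
/- Let R be a commutative ring and let ℓ, m ≥ 1 and n ≥ 2 be integers. Let W ∈ R^{(ℓ+1)×(ℓ+1)} be invertible, let a ∈ R^{n−1}, A ∈ R^{ℓ×(n−1)}, s ∈ R^m, S ∈ R^{m×ℓ}, and let H ∈ R^{(ℓ+1)×n} be the block matrix whose first row is (1, aᵀ) and whose remaining ℓ rows are (0, A). Let M ∈ R^{n×n} and z ∈ Rⁿ satisfy M·z = e₁, where e₁ ∈ Rⁿ is the first standard basis vector. Define Y_s := [s | s·aᵀ + S·A] ∈ R^{m×n}, Ŝ := [s | S]·W⁻¹ ∈ R^{m×(ℓ+1)}, and Â := W·H·M·[Iₙ | z] ∈ R^{(ℓ+1)×(n+1)}. Then Ŝ·Â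 = [Y_s·M | s], i.e., the product equals the block matrix whose first n columns are Y_s·M and whose last column is s. -/
/-! Since `W⁻¹ W = 1`, `Ŝ·W·H = [s | S]·H = Y_s`, so `Ŝ·Â = Y_s·M·[Iₙ | z] = [Y_s·M | Y_s·(M z)]`,
and `M z = e₁` picks out the first column `s` of `Y_s`. -/

open Matrix

namespace Matrix

variable {R : Type*} [Semiring R] {ι m n k : Type*}

lemma fromCols_replicateCol_mul_fromBlocks_one_replicateRow_zero [Unique ι] [DecidableEq ι]
    [Fintype k] (s : m → R) (S : Matrix m k R) (a : n → R) (A : Matrix k n R) :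
    fromCols (replicateCol ι s) S * fromBlocks 1 (replicateRow ι a) 0 A =
      fromCols (replicateCol ι s) (of fun i j => s i * a j + (S * A) i j) := by
  rw [fromCols_mul_fromBlocks, Matrix.mul_one, Matrix.mul_zero, add_zero,
    ← vecMulVec_eq ι]
  rfl

lemma fromCols_replicateCol_mulVec_sumElim_one_zero [Unique ι] [Fintype n] (s : m → R)
    (C : Matrix m n R) :
    fromCols (replicateCol ι s) C *ᵥ Sum.elim 1 0 = s := by
  rw [fromCols_mulVec_sumElim, mulVec_zero, add_zero]
  ext i
  simp [mulVec, dotProduct]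

lemma mul_fromCols_one_replicateCol [Fintype n] [DecidableEq n] (X : Matrix m n R) (z : n → R) :
    X * fromCols 1 (replicateCol ι z) = fromCols X (replicateCol ι (X *ᵥ z)) := by
  rw [mul_fromCols, Matrix.mul_one, replicateCol_mulVec]

end Matrix

theorem stmt_5_general {R : Type*} [CommRing R] (ℓ m n : ℕ)
    (W W' : Matrix (Fin 1 ⊕ Fin ℓ) (Fin 1 ⊕ Fin ℓ) R)
    (hW' : W' * W = 1)
    (a : Fin (n - 1) → R) (A : Matrix (Fin ℓ) (Fin (n - 1)) R)
    (s : Fin m → R) (S : Matrix (Fin m) (Fin ℓ) R)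
    (M : Matrix (Fin 1 ⊕ Fin (n - 1)) (Fin 1 ⊕ Fin (n - 1)) R)
    (z : Fin 1 ⊕ Fin (n - 1) → R)
    (hMz : M.mulVec z = Sum.elim (fun _ => (1 : R)) (fun _ => (0 : R))) :
    let H : Matrix (Fin 1 ⊕ Fin ℓ) (Fin 1 ⊕ Fin (n - 1)) R :=
      Matrix.fromBlocks (1 : Matrix (Fin 1) (Fin 1) R)
        (Matrix.of fun (_ : Fin 1) j => a j) (0 : Matrix (Fin ℓ) (Fin 1) R) A
    let Ys : Matrix (Fin m) (Fin 1 ⊕ Fin (n - 1)) R :=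
      Matrix.fromCols (Matrix.of fun i (_ : Fin 1) => s i)
        (Matrix.of fun i j => s i * a j + (S * A) i j)
    let Shat : Matrix (Fin m) (Fin 1 ⊕ Fin ℓ) R :=
      (Matrix.fromCols (Matrix.of fun i (_ : Fin 1) => s i) S) * W'
    let Ahat : Matrix (Fin 1 ⊕ Fin ℓ) ((Fin 1 ⊕ Fin (n - 1)) ⊕ Fin 1) R :=
      W * H * M *
        Matrix.fromCols (1 : Matrix (Fin 1 ⊕ Fin (n - 1)) (Fin 1 ⊕ Fin (n - 1)) R)
          (Matrix.of fun j (_ : Fin 1) => z j)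
    Shat * Ahat = Matrix.fromCols (Ys * M) (Matrix.of fun i (_ : Fin 1) => s i) := by
  intro H Ys Shat Ahat
  have hYs : fromCols (replicateCol (Fin 1) s) S * H = Ys :=
    fromCols_replicateCol_mul_fromBlocks_one_replicateRow_zero s S a A
  calc Shat * Ahat
      = fromCols (replicateCol (Fin 1) s) S * (W' * W) * H * M *
          fromCols 1 (replicateCol (Fin 1) z) := by
        simp only [Shat, Ahat, Matrix.mul_assoc]; rfl
    _ = fromCols (Ys * M) (replicateCol (Fin 1) (Ys *ᵥ (M *ᵥ z))) := by
        rw [hW', Matrix.mul_one, hYs, mul_fromCols_one_replicateCol, mulVec_mulVec]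
    _ = fromCols (Ys * M) (replicateCol (Fin 1) s) := by
        rw [hMz]
        congr 2
        exact fromCols_replicateCol_mulVec_sumElim_one_zero s _

/-- The key algebraic identity `Ŝ·Â = [Y_s·M | s]`, where `Ŝ = [s | S]·W⁻¹`,
`Â = W·H·M·[Iₙ | z]`, `H` is the block matrix with first row `(1, aᵀ)` and remaining
rows `(0, A)`, `Y_s = [s | s·aᵀ + S·A]`, and `M·z = e₁`. The `n`-dimensional index set
is represented as `Fin 1 ⊕ Fin (n-1)` and the `(ℓ+1)`-dimensional one as `Fin 1 ⊕ Fin ℓ`. -/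
theorem stmt_5 {R : Type*} [CommRing R] (ℓ m n : ℕ) (hℓ : 1 ≤ ℓ) (hm : 1 ≤ m) (hn : 2 ≤ n)
    (W W' : Matrix (Fin 1 ⊕ Fin ℓ) (Fin 1 ⊕ Fin ℓ) R)
    (hW : W * W' = 1) (hW' : W' * W = 1)
    (a : Fin (n - 1) → R) (A : Matrix (Fin ℓ) (Fin (n - 1)) R)
    (s : Fin m → R) (S : Matrix (Fin m) (Fin ℓ) R)
    (M : Matrix (Fin 1 ⊕ Fin (n - 1)) (Fin 1 ⊕ Fin (n - 1)) R)
    (z : Fin 1 ⊕ Fin (n - 1) → R)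
    (hMz : M.mulVec z = Sum.elim (fun _ => (1 : R)) (fun _ => (0 : R))) :
    let H : Matrix (Fin 1 ⊕ Fin ℓ) (Fin 1 ⊕ Fin (n - 1)) R :=
      Matrix.fromBlocks (1 : Matrix (Fin 1) (Fin 1) R)
        (Matrix.of fun (_ : Fin 1) j => a j) (0 : Matrix (Fin ℓ) (Fin 1) R) A
    let Ys : Matrix (Fin m) (Fin 1 ⊕ Fin (n - 1)) R :=
      Matrix.fromCols (Matrix.of fun i (_ : Fin 1) => s i)
        (Matrix.of fun i j => s i * a j + (S * A) i j)
    let Shat : Matrix (Fin m) (Fin 1 ⊕ Fin ℓ) R :=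
      (Matrix.fromCols (Matrix.of fun i (_ : Fin 1) => s i) S) * W'
    let Ahat : Matrix (Fin 1 ⊕ Fin ℓ) ((Fin 1 ⊕ Fin (n - 1)) ⊕ Fin 1) R :=
      W * H * M *
        Matrix.fromCols (1 : Matrix (Fin 1 ⊕ Fin (n - 1)) (Fin 1 ⊕ Fin (n - 1)) R)
          (Matrix.of fun j (_ : Fin 1) => z j)
    Shat * Ahat = Matrix.fromCols (Ys * M) (Matrix.of fun i (_ : Fin 1) => s i) :=
  stmt_5_general ℓ m n W W' hW' a A s S M z hMz
end

section
/- Let n ≥ 1, let s ∈ ℝⁿ be a unit vector (‖s‖ = 1), and let β, γ > 0. Then for every x ∈ ℝⁿ: exp(−π‖x‖²) · Σ_{k∈ℤ} exp(−π(k − γ⟨s,x⟩)²/β²) = Σ_{k∈ℤ} exp(−πk²/(β²+γ²)) · exp(−π‖x − ⟨s,x⟩·s‖²) · exp(−π·((β²+γ²)/β²)·(⟨s,x⟩ − γk/(β²+γ²))²). (This expresses the unnormalized hCLWE density as a mixture of Gaussians along the secret direction s; here x − ⟨s,x⟩·s is the projection of x onto the orthogonal complement of s.) -/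
open Real

/-
Write `t = ⟨s, x⟩`. By Pythagoras `‖x‖² = ‖x - t s‖² + t²`, so the identity holds term by term:
the two exponents agree after completing the square in `t`.
-/

theorem norm_sub_inner_smul_sq_of_norm_eq_one {E : Type*} [NormedAddCommGroup E]
    [InnerProductSpace ℝ E] {s : E} (hs : ‖s‖ = 1) (x : E) :
    ‖x - (inner ℝ s x : ℝ) • s‖ ^ 2 = ‖x‖ ^ 2 - (inner ℝ s x : ℝ) ^ 2 := by
  rw [norm_sub_sq_real, norm_smul, real_inner_smul_right, real_inner_comm, hs,
    Real.norm_eq_abs, mul_one, sq_abs]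
  ring

theorem sub_mul_sq_div_add_sq_eq_complete_square {β : ℝ} (hβ : β ≠ 0) (γ k t : ℝ) :
    (k - γ * t) ^ 2 / β ^ 2 + t ^ 2 =
      k ^ 2 / (β ^ 2 + γ ^ 2) + (β ^ 2 + γ ^ 2) / β ^ 2 * (t - γ * k / (β ^ 2 + γ ^ 2)) ^ 2 := by
  have hβγ : β ^ 2 + γ ^ 2 ≠ 0 := by positivity
  field_simp
  ring

theorem stmt_6_general (n : ℕ) (s : EuclideanSpace ℝ (Fin n)) (hs : ‖s‖ = 1)
    (β γ : ℝ) (hβ : 0 < β) (x : EuclideanSpace ℝ (Fin n)) :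
    Real.exp (-π * ‖x‖ ^ 2) *
        ∑' k : ℤ, Real.exp (-π * ((k : ℝ) - γ * (inner ℝ s x : ℝ)) ^ 2 / β ^ 2) =
      ∑' k : ℤ,
        Real.exp (-π * (k : ℝ) ^ 2 / (β ^ 2 + γ ^ 2)) *
          Real.exp (-π * ‖x - (inner ℝ s x : ℝ) • s‖ ^ 2) *
          Real.exp (-π * ((β ^ 2 + γ ^ 2) / β ^ 2) *
            ((inner ℝ s x : ℝ) - γ * (k : ℝ) / (β ^ 2 + γ ^ 2)) ^ 2) := by
  rw [← tsum_mul_left]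
  refine tsum_congr fun k => ?_
  rw [← Real.exp_add, ← Real.exp_add, ← Real.exp_add, norm_sub_inner_smul_sq_of_norm_eq_one hs]
  congr 1
  linear_combination (-π) * sub_mul_sq_div_add_sq_eq_complete_square hβ.ne' γ k (inner ℝ s x)

/-- The unnormalized hCLWE density as a mixture of Gaussians along the secret direction:
for a unit vector `s` and `β, γ > 0`,
`e^{-π‖x‖²} · Σ_k e^{-π(k - γ⟨s,x⟩)²/β²}`
` = Σ_k e^{-πk²/(β²+γ²)} · e^{-π‖x - ⟨s,x⟩s‖²} · e^{-π((β²+γ²)/β²)(⟨s,x⟩ - γk/(β²+γ²))²}`. -/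
theorem stmt_6 (n : ℕ) (hn : 1 ≤ n) (s : EuclideanSpace ℝ (Fin n)) (hs : ‖s‖ = 1)
    (β γ : ℝ) (hβ : 0 < β) (hγ : 0 < γ) (x : EuclideanSpace ℝ (Fin n)) :
    Real.exp (-π * ‖x‖ ^ 2) *
        ∑' k : ℤ, Real.exp (-π * ((k : ℝ) - γ * (inner ℝ s x : ℝ)) ^ 2 / β ^ 2) =
      ∑' k : ℤ,
        Real.exp (-π * (k : ℝ) ^ 2 / (β ^ 2 + γ ^ 2)) *
          Real.exp (-π * ‖x - (inner ℝ s x : ℝ) • s‖ ^ 2) *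
          Real.exp (-π * ((β ^ 2 + γ ^ 2) / β ^ 2) *
            ((inner ℝ s x : ℝ) - γ * (k : ℝ) / (β ^ 2 + γ ^ 2)) ^ 2) :=
  stmt_6_general n s hs β γ hβ x
end

section
/- For every τ > 0: ∫_{ℝ} exp(−πx²/τ²) / (Σ_{m∈ℤ} exp(−π(m+x)²/τ²)) dx = 1. That is, x ↦ exp(−πx²/τ²)/θ_τ(x) is a probability density on ℝ. -/
open Real MeasureTheory

open Set
open scoped ENNReal

/-!
Let `θ(x) = ∑ₘ g(m + x)` be the periodization of `g(x) = e^{-πx²/τ²}`. Since `θ(n + x) = θ(x)` for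
`n ∈ ℤ`, unfolding `ℝ` over the fundamental domain `(0, 1]` of `ℤ` gives
`∫_ℝ g/θ = ∫_(0,1] ∑ₙ g(n + x)/θ(x) dx = ∫_(0,1] θ(x)/θ(x) dx = 1`.
-/

theorem lintegral_eq_tsum_setLIntegral_Ioc_zsmul_add {T : ℝ} (hT : 0 < T) (t : ℝ)
    (f : ℝ → ℝ≥0∞) :
    ∫⁻ x, f x = ∑' n : ℤ, ∫⁻ x in Ioc t (t + T), f (n • T + x) := by
  rw [(isAddFundamentalDomain_Ioc hT t volume).lintegral_eq_tsum'' f]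
  have hbij : Function.Bijective (codRestrict (fun n : ℤ => n • T) (AddSubgroup.zmultiples T)
      fun n => AddSubgroup.zsmul_mem_zmultiples T n) :=
    (Equiv.ofInjective (fun n : ℤ => n • T) (zsmul_left_strictMono hT).injective).bijective
  exact ((Equiv.ofBijective _ hbij).tsum_eq fun g => ∫⁻ x in Ioc t (t + T), f (g +ᵥ x)).symm

theorem tsum_int_add_int_add {α : Type*} [AddCommMonoid α] [TopologicalSpace α] (g : ℝ → α)
    (n : ℤ) (x : ℝ) : ∑' m : ℤ, g (m + (n + x)) = ∑' m : ℤ, g (m + x) := by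
  rw [← (Equiv.addRight n).tsum_eq fun m : ℤ => g (m + x)]
  simp only [Equiv.coe_addRight, Int.cast_add, add_assoc]

theorem integral_div_tsum_int_add_eq_one {g : ℝ → ℝ} (hg : Measurable g) (hg₀ : ∀ x, 0 ≤ g x)
    (hpos : ∀ x, 0 < ∑' m : ℤ, g (m + x)) :
    ∫ x, g x / ∑' m : ℤ, g (m + x) = 1 := by
  set P : ℝ → ℝ := fun x => ∑' m : ℤ, g (m + x)
  have hsum : ∀ x, Summable fun m : ℤ => g (m + x) := fun x =>
    by_contra fun h => (hpos x).ne' (tsum_eq_zero_of_not_summable h)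
  have hP : Measurable P := Measurable.tsum fun m => hg.comp (measurable_const_add _)
  have htranslates (x : ℝ) : ∑' n : ℤ, ENNReal.ofReal (g (n + x) / P (n + x)) = 1 := by
    simp_rw [P, tsum_int_add_int_add g]
    rw [← ENNReal.ofReal_tsum_of_nonneg (fun n => div_nonneg (hg₀ _) (hpos x).le)
      ((hsum x).div_const _), tsum_div_const, div_self (hpos x).ne', ENNReal.ofReal_one]
  have hlintegral : ∫⁻ x, ENNReal.ofReal (g x / P x) = 1 := by
    rw [lintegral_eq_tsum_setLIntegral_Ioc_zsmul_add one_pos 0, ← lintegral_tsum]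
    · simp [htranslates]
    · exact fun n => ((hg.div hP).comp (measurable_const_add _)).ennreal_ofReal.aemeasurable
  rw [integral_eq_lintegral_of_nonneg_ae (.of_forall fun x => div_nonneg (hg₀ x) (hpos x).le)
    (hg.div hP).aestronglyMeasurable, hlintegral, ENNReal.toReal_one]

theorem summable_exp_neg_pi_mul_int_add_sq_div {τ : ℝ} (hτ : τ ≠ 0) (x : ℝ) :
    Summable fun m : ℤ => exp (-π * (m + x) ^ 2 / τ ^ 2) := by
  refine (HurwitzKernelBounds.summable_f_int 0 x (by positivity : 0 < 1 / τ ^ 2)).congr fun m => ?_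
  simp only [HurwitzKernelBounds.f_int, pow_zero, one_mul]
  ring_nf

/-- `x ↦ e^{-πx²/τ²}/θ_τ(x)` is a probability density on `ℝ`, where
`θ_τ(x) = Σ_{m ∈ ℤ} e^{-π(m+x)²/τ²}`. -/
theorem stmt_8 (τ : ℝ) (hτ : 0 < τ) :
    ∫ x : ℝ, Real.exp (-π * x ^ 2 / τ ^ 2) /
        ∑' m : ℤ, Real.exp (-π * ((m : ℝ) + x) ^ 2 / τ ^ 2) = 1 :=
  integral_div_tsum_int_add_eq_one (by fun_prop) (fun x => (exp_pos _).le) fun x =>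
    (summable_exp_neg_pi_mul_int_add_sq_div hτ.ne' x).tsum_pos (fun m => (exp_pos _).le) 0
      (exp_pos _)
end

section
/- Let τ > 0 and ε ∈ (0, 1/2], and suppose Σ_{n∈ℤ, n≠0} exp(−π n² τ²) ≤ ε (i.e., τ is at least the smoothing parameter η_ε(ℤ)). Define the probability densities g(x) := exp(−πx²/τ²)/θ_τ(x) and h(x) := exp(−πx²/τ²)/τ on ℝ, where θ_τ(x) := Σ_{m∈ℤ} exp(−π(m+x)²/τ²). Then the statistical (total variation) distance (1/2)·∫_{ℝ} |g(x) − h(x)| dx is at most 4ε. -/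
open Real MeasureTheory

/-!
Poisson summation turns the periodised Gaussian into its Fourier series,
`θ_τ(x) = τ · Σₙ e^{-πn²τ²} e^{-2πinx}`, whose `n = 0` term is `τ`; the smoothing condition then
gives `|θ_τ(x) - τ| ≤ ετ`, so `θ_τ ≥ τ/2` and `|g - h| ≤ (2ε/τ) e^{-πx²/τ²}` pointwise.
Integrating bounds the statistical distance by `ε`.
-/

section Poisson

open Complex

lemma ofReal_tsum_exp_shift_eq_mul_tsum_jacobiTheta₂_term {τ : ℝ} (hτ : 0 < τ) (x : ℝ) :
    ((∑' m : ℤ, rexp (-π * ((m : ℝ) + x) ^ 2 / τ ^ 2) : ℝ) : ℂ) =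
      τ * ∑' n : ℤ, jacobiTheta₂_term n (-x) (I * τ ^ 2) := by
  have hτ2 : 0 < ((τ : ℂ) ^ 2).re := by rw [← ofReal_pow, ofReal_re]; positivity
  have h := Complex.tsum_exp_neg_quadratic hτ2 (-I * x)
  rw [one_div (2 : ℂ), sq_cpow_two_inv (by rwa [ofReal_re])] at h
  have hL : ∀ n : ℤ, cexp (-π * τ ^ 2 * n ^ 2 + 2 * π * (-I * x) * n) =
      jacobiTheta₂_term n (-x) (I * τ ^ 2) := fun n => by
    rw [jacobiTheta₂_term]; congr 1; ring_nf; rw [I_sq]; ring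
  have hR : ∀ n : ℤ, cexp (-π / τ ^ 2 * (n + I * (-I * x)) ^ 2) =
      (rexp (-π * ((n : ℝ) + x) ^ 2 / τ ^ 2) : ℂ) := fun n => by
    rw [← mul_assoc, mul_neg, I_mul_I, neg_neg, one_mul, ofReal_exp]; push_cast; ring_nf
  simp only [hL, hR] at h
  rw [ofReal_tsum, h, ← mul_assoc, mul_one_div_cancel (ofReal_ne_zero.mpr hτ.ne'), one_mul]

lemma norm_jacobiTheta₂_term_ofReal (n : ℤ) (x τ : ℝ) :
    ‖jacobiTheta₂_term n (-x) (I * τ ^ 2)‖ = rexp (-π * (n : ℝ) ^ 2 * τ ^ 2) := by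
  rw [norm_jacobiTheta₂_term, ← ofReal_pow, I_mul_im, ofReal_re, neg_im, ofReal_im]
  ring_nf

lemma abs_tsum_exp_shift_sub_le {τ : ℝ} (hτ : 0 < τ) (x : ℝ) :
    |∑' m : ℤ, rexp (-π * ((m : ℝ) + x) ^ 2 / τ ^ 2) - τ| ≤
      τ * ∑' n : {n : ℤ // n ≠ 0}, rexp (-π * ((n : ℤ) : ℝ) ^ 2 * τ ^ 2) := by
  set f : ℤ → ℂ := fun n => jacobiTheta₂_term n (-x) (I * τ ^ 2)
  have hf : Summable f := (summable_jacobiTheta₂_term_iff _ _).mpr <| by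
    rw [← ofReal_pow, I_mul_im, ofReal_re]; positivity
  have hsplit : ∑' n, f n = 1 + ∑' n : {n : ℤ // n ≠ 0}, f n := by
    have hcompl : ({n : ℤ | n ≠ 0}ᶜ : Set ℤ) = {0} := by ext; simp
    rw [← hf.tsum_subtype_add_tsum_subtype_compl {n | n ≠ 0}, hcompl, tsum_singleton 0 f,
      show f 0 = 1 by simp [f, jacobiTheta₂_term], add_comm]
    rfl
  have hS : ‖∑' n : {n : ℤ // n ≠ 0}, f n‖ ≤
      ∑' n : {n : ℤ // n ≠ 0}, rexp (-π * ((n : ℤ) : ℝ) ^ 2 * τ ^ 2) := by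
    simpa only [f, norm_jacobiTheta₂_term_ofReal] using
      norm_tsum_le_tsum_norm (hf.norm.subtype _)
  calc |∑' m : ℤ, rexp (-π * ((m : ℝ) + x) ^ 2 / τ ^ 2) - τ|
      = ‖(τ : ℂ) * ∑' n : {n : ℤ // n ≠ 0}, f n‖ := by
        rw [← Real.norm_eq_abs, ← Complex.norm_real, ofReal_sub,
          ofReal_tsum_exp_shift_eq_mul_tsum_jacobiTheta₂_term hτ, hsplit, mul_add, mul_one,
          add_sub_cancel_left]
    _ ≤ τ * ∑' n : {n : ℤ // n ≠ 0}, rexp (-π * ((n : ℤ) : ℝ) ^ 2 * τ ^ 2) := by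
        rw [norm_mul, norm_real, norm_of_nonneg hτ.le]
        exact mul_le_mul_of_nonneg_left hS hτ.le

end Poisson

lemma abs_div_sub_div_le_of_abs_sub_le {A θ τ ε : ℝ} (hA : 0 ≤ A) (hτ : 0 < τ) (hε : ε ≤ 1 / 2)
    (h : |θ - τ| ≤ ε * τ) : |A / θ - A / τ| ≤ 2 * ε / τ * A := by
  have hθ : τ / 2 ≤ θ := by nlinarith [(abs_le.mp h).1]
  have hθ0 : 0 < θ := by linarith
  calc |A / θ - A / τ| = A * |θ - τ| / (θ * τ) := by
        rw [div_sub_div _ _ hθ0.ne' hτ.ne', abs_div, abs_of_pos (mul_pos hθ0 hτ),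
          show A * τ - θ * A = A * (τ - θ) by ring, abs_mul, abs_of_nonneg hA, abs_sub_comm]
    _ ≤ A * (ε * τ) / (τ / 2 * τ) := by
        gcongr
        exact mul_nonneg hA ((abs_nonneg _).trans h)
    _ = 2 * ε / τ * A := by field_simp

lemma integrable_exp_neg_pi_mul_sq_div_sq {τ : ℝ} (hτ : 0 < τ) :
    Integrable fun x : ℝ => rexp (-π * x ^ 2 / τ ^ 2) := by
  simpa only [neg_div, neg_mul, div_mul_eq_mul_div] using
    integrable_exp_neg_mul_sq (div_pos pi_pos (pow_pos hτ 2))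

lemma integral_exp_neg_pi_mul_sq_div_sq {τ : ℝ} (hτ : 0 < τ) :
    ∫ x : ℝ, rexp (-π * x ^ 2 / τ ^ 2) = τ := by
  simp_rw [mul_div_right_comm (-π), neg_div]
  rw [integral_gaussian, div_div_cancel₀ pi_ne_zero, sqrt_sq hτ.le]

/-- Smoothing: if `Σ_{n ≠ 0} e^{-πn²τ²} ≤ ε` with `ε ∈ (0, 1/2]`, then the statistical
distance between `g(x) = e^{-πx²/τ²}/θ_τ(x)` and the Gaussian density
`h(x) = e^{-πx²/τ²}/τ` is at most `4ε`. -/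
theorem stmt_9 (τ ε : ℝ) (hτ : 0 < τ) (hε : 0 < ε) (hε2 : ε ≤ 1 / 2)
    (hsm : ∑' n : {n : ℤ // n ≠ 0}, Real.exp (-π * ((n : ℤ) : ℝ) ^ 2 * τ ^ 2) ≤ ε) :
    (1 / 2) * ∫ x : ℝ,
        |Real.exp (-π * x ^ 2 / τ ^ 2) /
            (∑' m : ℤ, Real.exp (-π * ((m : ℝ) + x) ^ 2 / τ ^ 2)) -
          Real.exp (-π * x ^ 2 / τ ^ 2) / τ| ≤ 4 * ε := by
  have hθ (x : ℝ) : |∑' m : ℤ, rexp (-π * ((m : ℝ) + x) ^ 2 / τ ^ 2) - τ| ≤ ε * τ :=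
    (abs_tsum_exp_shift_sub_le hτ x).trans <| by
      rw [mul_comm ε]; exact mul_le_mul_of_nonneg_left hsm hτ.le
  have hint := (integrable_exp_neg_pi_mul_sq_div_sq hτ).const_mul (2 * ε / τ)
  calc (1 / 2) * ∫ x : ℝ, |rexp (-π * x ^ 2 / τ ^ 2) /
          (∑' m : ℤ, rexp (-π * ((m : ℝ) + x) ^ 2 / τ ^ 2)) - rexp (-π * x ^ 2 / τ ^ 2) / τ|
      ≤ (1 / 2) * ∫ x : ℝ, 2 * ε / τ * rexp (-π * x ^ 2 / τ ^ 2) := by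
        refine mul_le_mul_of_nonneg_left ?_ (by norm_num)
        exact integral_mono_of_nonneg (.of_forall fun _ => abs_nonneg _) hint
          (.of_forall fun x => abs_div_sub_div_le_of_abs_sub_le (exp_pos _).le hτ hε2 (hθ x))
    _ = ε := by rw [integral_const_mul, integral_exp_neg_pi_mul_sq_div_sq hτ]; field_simp
    _ ≤ 4 * ε := by linarith
end

section
/- Let n ≥ 1, let γ ∈ ℝ and β > 0, and let s ∈ ℝⁿ be a fixed unit vector. Let P be the Haar probability measure on the orthogonal group O(n) (real n×n matrices R with R·Rᵀ = I), let G be the probability measure on ℝⁿ with density x ↦ exp(−π‖x‖²), and let E be the probability measure on ℝ with density t ↦ exp(−πt²/β²)/β. Then the pushforward of the product measure P ⊗ G ⊗ E under the map (R, a, e) ↦ (R·a, γ·⟨a, s⟩ + e mod 1) ∈ ℝⁿ × (ℝ/ℤ) is equal to the pushforward of P ⊗ G ⊗ E under the map (R, a, e) ↦ (a, γ·⟨a, R·s⟩ + e mod 1). (In particular, CLWE samples with any fixed unit secret s, after a common random rotation of the sample vectors, are distributed exactly as CLWE samples whose secret is a uniformly random unit vector.) -/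
/-!
For a fixed rotation `R` the two distributions already agree: the Gaussian is a radial
density, hence invariant under `a ↦ R a`, and the sample map `(a, e) ↦ (a, γ⟨a, s⟩ + e)` is
equivariant, `(R a, γ⟨R a, R s⟩ + e) = (R a, γ⟨a, s⟩ + e)`. Integrating this fibrewise identity
against the distribution of `R` gives the theorem.
-/

open Real MeasureTheory

noncomputable instance (n : ℕ) : MeasurableSpace (Matrix (Fin n) (Fin n) ℝ) :=
  inferInstanceAs (MeasurableSpace (Fin n → Fin n → ℝ))

open scoped Matrix

theorem MeasureTheory.MeasurePreserving.withDensity_of_comp_eq {α : Type*} [MeasurableSpace α]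
    {μ : Measure α} {T : α → α} (hT : MeasurePreserving T μ μ) {w : α → ENNReal}
    (hw : Measurable w) (hwT : ∀ x, w (T x) = w x) :
    MeasurePreserving T (μ.withDensity w) (μ.withDensity w) := by
  refine ⟨hT.measurable, Measure.ext fun s hs => ?_⟩
  rw [Measure.map_apply hT.measurable hs, withDensity_apply _ (hT.measurable hs),
    withDensity_apply _ hs, ← hT.setLIntegral_comp_preimage hs hw]
  simp only [hwT]

namespace Matrix

theorem dotProduct_mulVec_mulVec_of_mem_orthogonalGroup {ι R : Type*} [Fintype ι]
    [DecidableEq ι] [CommRing R] {A : Matrix ι ι R} (hA : A ∈ orthogonalGroup ι R) (x y : ι → R) :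
    A *ᵥ x ⬝ᵥ A *ᵥ y = x ⬝ᵥ y := by
  rw [dotProduct_mulVec, ← vecMul_transpose, vecMul_vecMul,
    (mem_orthogonalGroup_iff' ι R).mp hA, vecMul_one]

variable {ι : Type*} [Fintype ι] [DecidableEq ι]

theorem abs_det_of_mem_orthogonalGroup {A : Matrix ι ι ℝ} (hA : A ∈ orthogonalGroup ι ℝ) :
    |A.det| = 1 :=
  CStarRing.norm_of_mem_unitary (det_of_mem_unitary hA)

theorem measurePreserving_mulVec_of_mem_orthogonalGroup {A : Matrix ι ι ℝ}
    (hA : A ∈ orthogonalGroup ι ℝ) :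
    MeasurePreserving (A *ᵥ ·) (volume : Measure (ι → ℝ)) volume := by
  have hdet : |A.det| = 1 := abs_det_of_mem_orthogonalGroup hA
  have hmap := Real.map_matrix_volume_pi_eq_smul_volume_pi (M := A) fun h => by simp [h] at hdet
  rw [abs_inv, hdet, inv_one, ENNReal.ofReal_one, one_smul] at hmap
  exact ⟨(toLin' A).continuous_of_finiteDimensional.measurable, hmap⟩

theorem measurePreserving_mulVec_withDensity_radial {A : Matrix ι ι ℝ}
    (hA : A ∈ orthogonalGroup ι ℝ) {φ : ℝ → ENNReal} (hφ : Measurable φ) :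
    MeasurePreserving (A *ᵥ ·) (volume.withDensity fun x => φ (x ⬝ᵥ x))
      (volume.withDensity fun x => φ (x ⬝ᵥ x)) :=
  (measurePreserving_mulVec_of_mem_orthogonalGroup hA).withDensity_of_comp_eq
    (by fun_prop) fun x => by rw [dotProduct_mulVec_mulVec_of_mem_orthogonalGroup hA]

end Matrix

@[fun_prop]
theorem Measurable.matrix_mulVec {α : Type*} [MeasurableSpace α] {n : ℕ}
    {f : α → Matrix (Fin n) (Fin n) ℝ} {g : α → Fin n → ℝ} (hf : Measurable f)
    (hg : Measurable g) : Measurable fun a => f a *ᵥ g a :=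
  measurable_pi_lambda _ fun i => by
    simp only [Matrix.mulVec, dotProduct]
    fun_prop

theorem MeasureTheory.Measure.map_prod_eq_of_forall_map_eq {α β γ : Type*}
    [MeasurableSpace α] [MeasurableSpace β] [MeasurableSpace γ] (μ : Measure α) {ν : Measure β}
    [SFinite ν] {F G : α × β → γ} (hF : Measurable F) (hG : Measurable G)
    (hFG : ∀ a, ν.map (fun b => F (a, b)) = ν.map (fun b => G (a, b))) :
    (μ.prod ν).map F = (μ.prod ν).map G := by
  ext s hs
  rw [map_apply hF hs, map_apply hG hs, prod_apply (hF hs), prod_apply (hG hs)]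
  refine lintegral_congr fun a => ?_
  have hFa : Measurable fun b => F (a, b) := hF.comp measurable_prodMk_left
  have hGa : Measurable fun b => G (a, b) := hG.comp measurable_prodMk_left
  have := congrArg (· s) (hFG a)
  rwa [map_apply hFa hs, map_apply hGa hs] at this

section CLWE

variable {ι : Type*} [Fintype ι]

noncomputable def clweSample (γ : ℝ) (s : ι → ℝ) (q : (ι → ℝ) × ℝ) :
    (ι → ℝ) × AddCircle (1 : ℝ) :=
  (q.1, ((γ * (q.1 ⬝ᵥ s) + q.2 : ℝ) : AddCircle (1 : ℝ)))

@[fun_prop]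
theorem measurable_clweSample (γ : ℝ) (s : ι → ℝ) : Measurable (clweSample γ s) := by
  unfold clweSample dotProduct
  fun_prop

variable [DecidableEq ι]

theorem clweSample_mulVec_of_mem_orthogonalGroup {R : Matrix ι ι ℝ}
    (hR : R ∈ Matrix.orthogonalGroup ι ℝ) (γ : ℝ) (s : ι → ℝ) (q : (ι → ℝ) × ℝ) :
    clweSample γ (R *ᵥ s) (Prod.map (R *ᵥ ·) id q) =
      Prod.map (R *ᵥ ·) id (clweSample γ s q) := by
  simp only [clweSample, Prod.map, id, Matrix.dotProduct_mulVec_mulVec_of_mem_orthogonalGroup hR]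

theorem map_clweSample_mulVec_of_mem_orthogonalGroup {R : Matrix ι ι ℝ}
    (hR : R ∈ Matrix.orthogonalGroup ι ℝ) {μ : Measure (ι → ℝ)} [SFinite μ]
    (hμ : MeasurePreserving (R *ᵥ ·) μ μ) (ν : Measure ℝ) [SFinite ν] (γ : ℝ) (s : ι → ℝ) :
    (μ.prod ν).map (Prod.map (R *ᵥ ·) id ∘ clweSample γ s) =
      (μ.prod ν).map (clweSample γ (R *ᵥ s)) := by
  have hRν : MeasurePreserving (Prod.map (R *ᵥ ·) id) (μ.prod ν) (μ.prod ν) :=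
    hμ.prod (.id ν)
  have hcomm : Prod.map (R *ᵥ ·) id ∘ clweSample γ s =
      clweSample γ (R *ᵥ s) ∘ Prod.map (R *ᵥ ·) id :=
    funext fun q => (clweSample_mulVec_of_mem_orthogonalGroup hR γ s q).symm
  rw [hcomm, ← Measure.map_map (measurable_clweSample γ _) hRν.measurable, hRν.map_eq]

end CLWE

theorem stmt_11_general (n : ℕ) (s : Fin n → ℝ)
    (γ β : ℝ)
    (P : Measure (Matrix.orthogonalGroup (Fin n) ℝ)) :
    let G : Measure (Fin n → ℝ) :=
      volume.withDensity fun x => ENNReal.ofReal (Real.exp (-π * ∑ i, x i ^ 2))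
    let E : Measure ℝ :=
      volume.withDensity fun t => ENNReal.ofReal (Real.exp (-π * t ^ 2 / β ^ 2) / β)
    Measure.map
        (fun p : Matrix.orthogonalGroup (Fin n) ℝ × (Fin n → ℝ) × ℝ =>
          ((p.1 : Matrix (Fin n) (Fin n) ℝ).mulVec p.2.1,
            ((γ * ∑ i, p.2.1 i * s i + p.2.2 : ℝ) : AddCircle (1 : ℝ))))
        (P.prod (G.prod E)) =
      Measure.map
        (fun p : Matrix.orthogonalGroup (Fin n) ℝ × (Fin n → ℝ) × ℝ =>
          (p.2.1,
            ((γ * ∑ i, p.2.1 i * ((p.1 : Matrix (Fin n) (Fin n) ℝ).mulVec s) i + p.2.2 : ℝ) :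
              AddCircle (1 : ℝ))))
        (P.prod (G.prod E)) := by
  intro G E
  have hG : G = volume.withDensity fun x => ENNReal.ofReal (Real.exp (-π * (x ⬝ᵥ x))) := by
    simp only [G, dotProduct, sq]
  refine P.map_prod_eq_of_forall_map_eq (by fun_prop) (by fun_prop) fun R => ?_
  have hRG : MeasurePreserving (R.1 *ᵥ ·) G G := by
    rw [hG]
    exact Matrix.measurePreserving_mulVec_withDensity_radial R.2
      (φ := fun t => ENNReal.ofReal (exp (-π * t))) (by fun_prop)
  exact map_clweSample_mulVec_of_mem_orthogonalGroup R.2 hRG E γ s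

/-- Randomizing the CLWE secret direction: with `P` the Haar probability measure on the
orthogonal group `O(n)` (characterized as a left-invariant probability measure), `G` the
standard Gaussian on `ℝⁿ` and `E` the Gaussian of width `β` on `ℝ`, the distribution of
`(R·a, γ⟨a,s⟩ + e mod 1)` equals the distribution of `(a, γ⟨a,R·s⟩ + e mod 1)`. -/
theorem stmt_11 (n : ℕ) (hn : 1 ≤ n) (s : Fin n → ℝ) (hs : ∑ i, s i ^ 2 = 1)
    (γ β : ℝ) (hβ : 0 < β)
    (P : Measure (Matrix.orthogonalGroup (Fin n) ℝ))
    (hP : IsProbabilityMeasure P)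
    (hinv : ∀ g : Matrix.orthogonalGroup (Fin n) ℝ,
      P.map (fun R => g * R) = P) :
    let G : Measure (Fin n → ℝ) :=
      volume.withDensity fun x => ENNReal.ofReal (Real.exp (-π * ∑ i, x i ^ 2))
    let E : Measure ℝ :=
      volume.withDensity fun t => ENNReal.ofReal (Real.exp (-π * t ^ 2 / β ^ 2) / β)
    Measure.map
        (fun p : Matrix.orthogonalGroup (Fin n) ℝ × (Fin n → ℝ) × ℝ =>
          ((p.1 : Matrix (Fin n) (Fin n) ℝ).mulVec p.2.1,
            ((γ * ∑ i, p.2.1 i * s i + p.2.2 : ℝ) : AddCircle (1 : ℝ))))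
        (P.prod (G.prod E)) =
      Measure.map
        (fun p : Matrix.orthogonalGroup (Fin n) ℝ × (Fin n → ℝ) × ℝ =>
          (p.2.1,
            ((γ * ∑ i, p.2.1 i * ((p.1 : Matrix (Fin n) (Fin n) ℝ).mulVec s) i + p.2.2 : ℝ) :
              AddCircle (1 : ℝ))))
        (P.prod (G.prod E)) :=
  stmt_11_general n s γ β P
end
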